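/- The set {(p+q+r)²/(pqr) : p, q, r positive integers} is dense in the nonnegative real numbers. -/
import Mathlib


/-- The set `{(p+q+r)²/(pqr) : p, q, r ∈ ℤ⁺}` is dense in the nonnegative
reals. -/
theorem dense_anticanonical_volumes :
    ∀ x : ℝ, 0 ≤ x → ∀ ε : ℝ, 0 < ε → ∃ p q r : ℕ, 0 < p ∧ 0 < q ∧ 0 < r ∧
      |(((p : ℝ) + q + r) ^ 2 / ((p : ℝ) * q * r)) - x| < ε := by
  intro x hx ε hε
  have hε2 : 0 < ε / 2 := by linarith
  set y : ℝ := max x (ε / 2) with hydef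
  have hy : 0 < y := lt_of_lt_of_le hε2 (le_max_right _ _)
  have hxy : x ≤ y := le_max_left _ _
  have hyx : y ≤ x + ε / 2 := max_le (by linarith) (by linarith)
  set m : ℕ := ⌈2 * y ^ 2 / ε⌉₊ + 1 with hmdef
  have hm : 0 < m := Nat.succ_pos _
  have hM : (1 : ℝ) ≤ (m : ℝ) := by exact_mod_cast hm
  have hm2 : 2 * y ^ 2 / ε < (m : ℝ) :=
    lt_of_le_of_lt (Nat.le_ceil _) (by exact_mod_cast Nat.lt_succ_self _)
  have hM2 : 2 * y ^ 2 < ε * (m : ℝ) := by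
    rw [div_lt_iff₀ hε] at hm2; linarith
  set C : ℝ := (2 + (m : ℝ)) ^ 2 / (m : ℝ) with hCdef
  have hmpos : (0 : ℝ) < (m : ℝ) := by linarith
  have hC0 : 0 < C := div_pos (by positivity) hmpos
  have hCM : (m : ℝ) ≤ C := by
    rw [hCdef, le_div_iff₀ hmpos]; nlinarith
  set n : ℕ := ⌈C / y⌉₊ with hndef
  have hn : 0 < n := Nat.ceil_pos.mpr (div_pos hC0 hy)
  have hNpos : (0 : ℝ) < (n : ℝ) := by exact_mod_cast hn
  have hn1 : C / y ≤ (n : ℝ) := Nat.le_ceil _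
  have hn2 : (n : ℝ) < C / y + 1 := Nat.ceil_lt_add_one (le_of_lt (div_pos hC0 hy))
  have h1 : C ≤ (n : ℝ) * y := by
    rw [div_le_iff₀ hy] at hn1; linarith
  have h2 : (n : ℝ) * y < C + y := by
    have h := (lt_div_iff₀ hy).mp (by linarith : (n : ℝ) - 1 < C / y)
    nlinarith
  have hεC : 2 * y ^ 2 < ε * C := by nlinarith [hCM, hε.le, hM2]
  have hεN : 2 * y < ε * (n : ℝ) := by nlinarith [mul_le_mul_of_nonneg_left h1 hε.le]
  have hvy : C / (n : ℝ) ≤ y := by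
    rw [div_le_iff₀ hNpos]; linarith
  have hlow : y - ε / 2 < C / (n : ℝ) := by
    rw [lt_div_iff₀ hNpos]; nlinarith
  refine ⟨n, n, n * m, hn, hn, Nat.mul_pos hn hm, ?_⟩
  have hveq : (((n : ℝ)) + (n : ℝ) + ((n * m : ℕ) : ℝ)) ^ 2 /
      ((n : ℝ) * (n : ℝ) * ((n * m : ℕ) : ℝ)) = C / (n : ℝ) := by
    rw [Nat.cast_mul, hCdef]
    field_simp
    ring
  rw [hveq, abs_lt]
  constructor
  · linarith
  · linarith
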